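/- Let G be a finite simple graph with maximum degree Δ and let c be a Grundy coloring of G. Let y be a coloring obtained from c by a Kempe chain operation or by a color elimination, and let z be a Grundy coloring obtained from y by a run of Grundy local search. If z ⪰ c, then the number of vertices that z colors with color Δ or Δ+1 is at most the number of vertices that c colors with color Δ or Δ+1. -/

import Mathlib

set_option linter.unusedSectionVars false

open scoped ENNReal

attribute [local instance] Classical.propDecidable

noncomputable section

namespace DGC

/-! ### Markov chains and expected hitting times -/

/-- `survive K A t s` is the probability that the Markov chain with transition kernel `K`,
started at `s`, has not visited the set `A` within its first `t` steps
(time `0` counts: if `s ∈ A` the chain has hit `A` at time `0`). -/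
def survive {S : Type*} (K : S → PMF S) (A : Set S) : ℕ → S → ℝ≥0∞
  | 0, s => if s ∈ A then 0 else 1
  | (t + 1), s => if s ∈ A then 0 else ∑' s', K s s' * survive K A t s'

/-- The expected hitting time of the set `A` for the Markov chain with kernel `K`
started at `s`; it equals `∑_{t ≥ 0} Pr[T > t]` where `T = min {t : X_t ∈ A}`, and it is `∞`
if `A` is reached with probability less than one. -/
def expectedHitting {S : Type*} (K : S → PMF S) (A : Set S) (s : S) : ℝ≥0∞ :=
  ∑' t, survive K A t s

/-- `log⁺ T = max {1, ln T}`. -/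
def logPlus (T : ℕ) : ℝ := max 1 (Real.log T)

variable {V : Type*} [Fintype V] [DecidableEq V]

/-! ### Colorings, conflicts -/

/-- A coloring (a map `V → ℕ`, colors being `1,2,3,…`) is proper if no edge is monochromatic. -/
def IsProper (G : SimpleGraph V) (c : V → ℕ) : Prop :=
  ∀ u v, G.Adj u v → c u ≠ c v

/-- The set of conflicting edges of the coloring `c`. -/
def conflictSet (G : SimpleGraph V) (c : V → ℕ) : Set (Sym2 V) :=
  {e | e ∈ G.edgeSet ∧ ∃ u v, e = s(u, v) ∧ c u = c v}

/-- The number of conflicting edges of the coloring `c`. -/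
def numConflicts (G : SimpleGraph V) (c : V → ℕ) : ℕ :=
  (conflictSet G c).ncard

/-- The set of proper 2-colorings (with color set `{1,2}`). -/
def properTwoColorings (G : SimpleGraph V) : Set (V → ℕ) :=
  {c | IsProper G c ∧ ∀ v, c v = 1 ∨ c v = 2}

/-- Vertices that are an endpoint of some conflicting edge. -/
def conflictVerts (G : SimpleGraph V) (c : V → ℕ) : Finset V :=
  Finset.univ.filter fun v => ∃ u, G.Adj v u ∧ c v = c u

/-! ### RLS and the (1+1) EA with `k = 2` colors (palette `{1,2}`) -/

/-- Recolor vertex `v` with the unique other color of the palette `{1,2}`. -/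
def flip (c : V → ℕ) (v : V) : V → ℕ := Function.update c v (3 - c v)

/-- One iteration of RLS with `k = 2` colors: choose a vertex `v` uniformly at random,
recolor it with the other color, and accept iff the number of conflicting edges
does not increase. -/
def rls2 (G : SimpleGraph V) (c : V → ℕ) : PMF (V → ℕ) :=
  if h : Nonempty V then
    (@PMF.uniformOfFintype V _ h).map fun v =>
      if numConflicts G (flip c v) ≤ numConflicts G c then flip c v else c
  else PMF.pure c

/-- `PMF.bernoulli` as it was (with an `ℝ≥0∞` parameter): probability `p` to `true`
and `1 - p` to `false`. -/
def bernoulliENN (p : ℝ≥0∞) (h : p ≤ 1) : PMF Bool :=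
  PMF.ofFintype (fun b => cond b p (1 - p)) (by rw [Fintype.sum_bool]; simp [add_tsub_cancel_of_le h])

/-- Independent Bernoulli choices along a list of vertices. -/
def flipsAux (p : V → ℝ≥0∞) (h : ∀ v, p v ≤ 1) : List V → PMF (V → Bool)
  | [] => PMF.pure fun _ => false
  | v :: vs =>
      (bernoulliENN (p v) (h v)).bind fun b =>
        (flipsAux p h vs).map fun g => Function.update g v b

/-- A random subset of the vertices (as an indicator function), where each vertex `v` is
included independently with probability `p v`. -/
def flips (p : V → ℝ≥0∞) (h : ∀ v, p v ≤ 1) : PMF (V → Bool) :=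
  flipsAux p h Finset.univ.toList

/-- `1/|V|` (or `0` for the empty graph). -/
def invCard (V : Type*) [Fintype V] : ℝ≥0∞ :=
  if 0 < Fintype.card V then (Fintype.card V : ℝ≥0∞)⁻¹ else 0

lemma invCard_le_one : invCard V ≤ 1 := by
  unfold invCard
  split
  · rw [ENNReal.inv_le_one]
    exact_mod_cast ‹0 < Fintype.card V›
  · exact zero_le_one

lemma half_le_one : (1 / 2 : ℝ≥0∞) ≤ 1 := by
  rw [ENNReal.div_le_iff (by norm_num) (by norm_num)]
  norm_num

/-- Recolor (within the palette `{1,2}`) exactly the vertices selected by `bs`. -/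
def mutate2 (c : V → ℕ) (bs : V → Bool) : V → ℕ := fun v => if bs v then 3 - c v else c v

/-- One iteration of the (1+1) EA with `k = 2` colors: every vertex is independently
recolored with probability `1/n`, and the offspring is accepted iff its number of
conflicting edges is not larger. -/
def ea2 (G : SimpleGraph V) (c : V → ℕ) : PMF (V → ℕ) :=
  (flips (fun _ => invCard V) (fun _ => invCard_le_one)).map fun bs =>
    if numConflicts G (mutate2 c bs) ≤ numConflicts G c then mutate2 c bs else c

/-- One iteration of the tailored (1+1) EA with `k = 2` colors: every endpoint of a
conflicting edge is independently recolored with probability `1/2`, every other vertex with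
probability `1/n`; the offspring is accepted iff its number of conflicting edges is
not larger. -/
def tailoredEA2 (G : SimpleGraph V) (c : V → ℕ) : PMF (V → ℕ) :=
  (flips (fun v => if v ∈ conflictVerts G c then 1 / 2 else invCard V)
      (fun v => by try dsimp only
                   split; exacts [half_le_one, invCard_le_one])).map fun bs =>
    if numConflicts G (mutate2 c bs) ≤ numConflicts G c then mutate2 c bs else c

/-- One iteration of the tailored RLS with `k = 2` colors: with probability `1/2` a vertex is
chosen uniformly at random among the endpoints of conflicting edges (if any exist), otherwise
uniformly at random among all vertices; it is recolored with the other color, and the move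
is accepted iff the number of conflicting edges does not increase. -/
def tailoredRls2 (G : SimpleGraph V) (c : V → ℕ) : PMF (V → ℕ) :=
  if hV : Nonempty V then
    (bernoulliENN (1 / 2) half_le_one).bind fun coin =>
      (if h : coin = true ∧ (conflictVerts G c).Nonempty
        then PMF.uniformOfFinset (conflictVerts G c) h.2
        else @PMF.uniformOfFintype V _ hV).map fun v =>
        if numConflicts G (flip c v) ≤ numConflicts G c then flip c v else c
  else PMF.pure c

/-! ### Grundy colorings and Grundy local search -/

/-- The smallest color (from `{1,2,3,…}`) not used by any neighbor of `v`. -/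
def smallestFree (G : SimpleGraph V) (c : V → ℕ) (v : V) : ℕ :=
  sInf {i | 1 ≤ i ∧ ∀ u, G.Adj v u → c u ≠ i}

/-- A coloring is a Grundy coloring iff every vertex has the smallest color not used by any
of its neighbors (equivalently: it is proper, and every vertex `v` has, for every color
`i < c v`, an `i`-colored neighbor). -/
def IsGrundy (G : SimpleGraph V) (c : V → ℕ) : Prop :=
  ∀ v, c v = smallestFree G c v

/-- One step of Grundy local search: some vertex whose color is not the smallest color absent
from its neighborhood is recolored with the smallest color not used by any of its neighbors. -/
def glsStep (G : SimpleGraph V) (c c' : V → ℕ) : Prop :=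
  ∃ v, c v ≠ smallestFree G c v ∧ c' = Function.update c v (smallestFree G c v)

/-- `glsRun G c c'` holds iff `c'` is a possible outcome of a (maximal) run of Grundy local
search started at `c`: it is reachable from `c` by Grundy local search steps and is a
Grundy coloring. -/
def glsRun (G : SimpleGraph V) (c c' : V → ℕ) : Prop :=
  Relation.ReflTransGen (glsStep G) c c' ∧ IsGrundy G c'

/-- The Grundy number of `G`: the largest color used by any Grundy coloring of `G`. -/
def grundyNumber (G : SimpleGraph V) : ℕ :=
  sSup {k | ∃ c v, IsGrundy G c ∧ c v = k}

/-! ### Kempe chains, color eliminations, and iterated local search -/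

/-- The restriction of `G` to the vertex set `S` (an induced subgraph on the same
vertex type). -/
def restrict (G : SimpleGraph V) (S : Set V) : SimpleGraph V where
  Adj u w := G.Adj u w ∧ u ∈ S ∧ w ∈ S
  symm := ⟨by intro u w h; exact ⟨h.1.symm, h.2.2, h.2.1⟩⟩
  loopless := ⟨by intro u h; exact G.loopless.irrefl u h.1⟩

/-- `H_j(v)`: the connected component containing `v` of the subgraph of `G` induced by the
vertices colored `c v` or `j`. -/
def kempeSet (G : SimpleGraph V) (c : V → ℕ) (v : V) (j : ℕ) : Set V :=
  {u | (restrict G {w | c w = c v ∨ c w = j}).Reachable v u}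

/-- The Kempe chain operation `(v, j)`: swap the colors `c v` and `j` on all vertices of
`H_j(v)`. -/
def kempeSwap (G : SimpleGraph V) (c : V → ℕ) (v : V) (j : ℕ) : V → ℕ := fun u =>
  if u ∈ kempeSet G c v j then
    if c u = c v then j else if c u = j then c v else c u
  else c u

/-- The union `H_j(v₁) ∪ … ∪ H_j(v_ℓ)` over all `i`-colored neighbors `v₁, …, v_ℓ` of `v`. -/
def ceSet (G : SimpleGraph V) (c : V → ℕ) (v : V) (i j : ℕ) : Set V :=
  {u | ∃ w, G.Adj v w ∧ c w = i ∧ (restrict G {x | c x = i ∨ c x = j}).Reachable w u}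

/-- The color elimination at `v` with colors `i, j`: swap colors `i` and `j` on
`H_j(v₁) ∪ … ∪ H_j(v_ℓ)`, where `v₁, …, v_ℓ` are the `i`-colored neighbors of `v`. -/
def ceSwap (G : SimpleGraph V) (c : V → ℕ) (v : V) (i j : ℕ) : V → ℕ := fun u =>
  if u ∈ ceSet G c v i j then
    if c u = i then j else if c u = j then i else c u
  else c u

/-- `n_i(c)`: the number of `i`-colored vertices of the coloring `c`. -/
def colorCount (c : V → ℕ) (i : ℕ) : ℕ := (Finset.univ.filter fun v => c v = i).card

/-- The selection order `x ⪰ y`: `x` has fewer conflicting edges than `y`, or equally many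
and the color frequencies satisfy `n_i(x) = n_i(y)` for all `i`, or `n_i(x) < n_i(y)` for the
largest index `i` with `n_i(x) ≠ n_i(y)`. -/
def Pref (G : SimpleGraph V) (x y : V → ℕ) : Prop :=
  numConflicts G x < numConflicts G y ∨
    (numConflicts G x = numConflicts G y ∧
      ((∀ i, colorCount x i = colorCount y i) ∨
        ∃ i, colorCount x i < colorCount y i ∧ ∀ k, i < k → colorCount x k = colorCount y k))

/-- One iteration of ILS with Kempe chains, where `gls` is the (arbitrary, but fixed) rule
producing the outcome of a run of Grundy local search: choose `v` uniformly at random and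
`j ∈ {1, …, deg(v) + 1}` uniformly at random, apply the Kempe chain operation `(v, j)`,
apply Grundy local search, and accept the result `z` iff `z ⪰ x`. -/
def ilsKempe (G : SimpleGraph V) (gls : (V → ℕ) → (V → ℕ)) (x : V → ℕ) :
    PMF (V → ℕ) :=
  if hV : Nonempty V then
    (@PMF.uniformOfFintype V _ hV).bind fun v =>
      (PMF.uniformOfFinset (Finset.Icc 1 (G.degree v + 1))
          ⟨1, by simp only [Finset.mem_Icc]; omega⟩).map fun j =>
        let z := gls (kempeSwap G x v j)
        if Pref G z x then z else x
  else PMF.pure x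

/-- The pairs of distinct colors `i ≠ j` with `i, j ∈ {1, …, c v − 1}`. -/
def cePairs (x : V → ℕ) (v : V) : Finset (ℕ × ℕ) :=
  ((Finset.Icc 1 (x v - 1)) ×ˢ (Finset.Icc 1 (x v - 1))).filter fun p => p.1 ≠ p.2

lemma cePairs_nonempty {x : V → ℕ} {v : V} (h : 3 ≤ x v) : (cePairs x v).Nonempty :=
  ⟨(1, 2), by simp only [cePairs, Finset.mem_filter, Finset.mem_product, Finset.mem_Icc]; omega⟩

/-- One iteration of ILS with color eliminations, where `gls` is the (arbitrary, but fixed)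
rule producing the outcome of a run of Grundy local search: choose `v` uniformly at random;
if `c v ≥ 3`, choose distinct `i, j ∈ {1, …, c v − 1}` uniformly at random and apply the
corresponding color elimination; apply Grundy local search, and accept the result `z`
iff `z ⪰ x`. -/
def ilsCE (G : SimpleGraph V) (gls : (V → ℕ) → (V → ℕ)) (x : V → ℕ) :
    PMF (V → ℕ) :=
  if hV : Nonempty V then
    (@PMF.uniformOfFintype V _ hV).bind fun v =>
      if h : 3 ≤ x v then
        (PMF.uniformOfFinset (cePairs x v) (cePairs_nonempty h)).map fun p =>
          let z := gls (ceSwap G x v p.1 p.2)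
          if Pref G z x then z else x
      else PMF.pure x
  else PMF.pure x


/-! ### Auxiliary lemmas for Statement 6 -/

section Stmt6Aux

variable {V : Type*} [Fintype V] [DecidableEq V] {G : SimpleGraph V}

lemma exists_free_le (G : SimpleGraph V) (x : V → ℕ) (v : V) :
    ∃ k, (1 ≤ k ∧ ∀ u, G.Adj v u → x u ≠ k) ∧ k ≤ G.degree v + 1 := by
  classical
  have h1 : ((G.neighborFinset v).image x).card ≤ G.degree v :=
    le_trans Finset.card_image_le (le_of_eq (G.card_neighborFinset_eq_degree v))
  have h2 : (Finset.Icc 1 (G.degree v + 1)).card = G.degree v + 1 := by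
    rw [Nat.card_Icc]; omega
  have h3 : ¬ (Finset.Icc 1 (G.degree v + 1) ⊆ (G.neighborFinset v).image x) := by
    intro hsub
    have := Finset.card_le_card hsub
    omega
  obtain ⟨k, hk1, hk2⟩ := Finset.not_subset.mp h3
  rw [Finset.mem_Icc] at hk1
  refine ⟨k, ⟨hk1.1, fun u hu hxu => hk2 ?_⟩, hk1.2⟩
  exact Finset.mem_image.mpr ⟨u, (G.mem_neighborFinset v u).mpr hu, hxu⟩

lemma smallestFree_le_of_free {x : V → ℕ} {v : V} {k : ℕ}
    (h1 : 1 ≤ k) (h2 : ∀ u, G.Adj v u → x u ≠ k) : smallestFree G x v ≤ k := by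
  unfold smallestFree
  exact Nat.sInf_le (show k ∈ {i | 1 ≤ i ∧ ∀ u, G.Adj v u → x u ≠ i} from ⟨h1, h2⟩)

lemma smallestFree_mem (x : V → ℕ) (v : V) :
    1 ≤ smallestFree G x v ∧ ∀ u, G.Adj v u → x u ≠ smallestFree G x v := by
  obtain ⟨k, hk, -⟩ := exists_free_le G x v
  have hne : {i | 1 ≤ i ∧ ∀ u, G.Adj v u → x u ≠ i}.Nonempty := ⟨k, hk⟩
  exact Nat.sInf_mem hne

lemma smallestFree_le_degree (x : V → ℕ) (v : V) :
    smallestFree G x v ≤ G.degree v + 1 := by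
  obtain ⟨k, hk, hk2⟩ := exists_free_le G x v
  unfold smallestFree
  exact le_trans (Nat.sInf_le (show k ∈ {i | 1 ≤ i ∧ ∀ u, G.Adj v u → x u ≠ i} from hk)) hk2

lemma IsGrundy.one_le {c : V → ℕ} (hc : IsGrundy G c) (v : V) : 1 ≤ c v := by
  rw [hc v]; exact (smallestFree_mem c v).1

lemma IsGrundy.le_maxDegree_succ {c : V → ℕ} (hc : IsGrundy G c) {Δ : ℕ}
    (hΔ : Δ = G.maxDegree) (v : V) : c v ≤ Δ + 1 := by
  rw [hc v, hΔ]
  exact le_trans (smallestFree_le_degree c v) (by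
    have := G.degree_le_maxDegree v
    omega)

lemma IsGrundy.proper {c : V → ℕ} (hc : IsGrundy G c) :
    ∀ u w, G.Adj u w → c u ≠ c w := by
  intro u w h hvals
  exact (smallestFree_mem c u).2 w h (by rw [← hvals, hc u])

lemma IsGrundy.exists_nbr {c : V → ℕ} (hc : IsGrundy G c) {v : V} {k : ℕ}
    (h1 : 1 ≤ k) (h2 : k < c v) : ∃ u, G.Adj v u ∧ c u = k := by
  by_contra hno
  push_neg at hno
  have : smallestFree G c v ≤ k := smallestFree_le_of_free h1 hno
  rw [← hc v] at this
  omega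

lemma gls_le {y x : V → ℕ} (hy : ∀ u w, G.Adj u w → y u ≠ y w)
    (h : Relation.ReflTransGen (glsStep G) y x) :
    (∀ u w, G.Adj u w → x u ≠ x w) ∧ ∀ u, 1 ≤ y u → 1 ≤ x u ∧ x u ≤ y u := by
  induction h with
  | refl => exact ⟨hy, fun u h1 => ⟨h1, le_rfl⟩⟩
  | @tail b xx _ hstep ih =>
    obtain ⟨ihp, ihle⟩ := ih
    obtain ⟨w, hw, hxeq⟩ := hstep
    subst hxeq
    constructor
    · intro u1 u2 hadj
      by_cases h1 : u1 = w <;> by_cases h2 : u2 = w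
      · rw [h1, h2] at hadj
        exact absurd hadj (G.loopless.irrefl w)
      · rw [h1, Function.update_self, Function.update_of_ne h2]
        intro hv
        rw [h1] at hadj
        exact (smallestFree_mem b w).2 u2 hadj hv.symm
      · rw [h2, Function.update_self, Function.update_of_ne h1]
        rw [h2] at hadj
        exact (smallestFree_mem b w).2 u1 (G.adj_symm hadj)
      · rw [Function.update_of_ne h1, Function.update_of_ne h2]
        exact ihp u1 u2 hadj
    · intro u hyu
      by_cases hne : u = w
      · rw [hne, Function.update_self]
        refine ⟨(smallestFree_mem b w).1, ?_⟩
        have hbu := ihle u hyu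
        rw [hne] at hbu
        have : smallestFree G b w ≤ b w :=
          smallestFree_le_of_free hbu.1 (fun u' hu' => (ihp w u' hu').symm)
        have := hbu.2
        omega
      · rw [Function.update_of_ne hne]
        exact ihle u hyu

lemma gls_fixed {c x : V → ℕ} (hc : IsGrundy G c)
    (h : Relation.ReflTransGen (glsStep G) c x) : x = c := by
  induction h with
  | refl => rfl
  | tail _ hstep ih =>
    rw [ih] at hstep
    obtain ⟨v, hv, -⟩ := hstep
    exact absurd (hc v) hv

lemma walk_mem {P : Set V} : ∀ {r u : V}, (restrict G P).Walk r u → r ∈ P → u ∈ P := by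
  intro r u p
  induction p with
  | nil => exact id
  | cons h' _ ih => exact fun _ => ih h'.2.2

lemma restrict_reachable_mem {P : Set V} {r u : V} (hr : r ∈ P)
    (h : (restrict G P).Reachable r u) : u ∈ P := by
  obtain ⟨p⟩ := h
  exact walk_mem p hr

lemma exists_dropper {z c : V → ℕ} {k : ℕ} (h : colorCount z k < colorCount c k) :
    ∃ u, c u = k ∧ z u ≠ k := by
  by_contra hno
  push_neg at hno
  have : colorCount c k ≤ colorCount z k := by
    apply Finset.card_le_card
    intro u hu
    rw [Finset.mem_filter] at hu ⊢
    exact ⟨hu.1, hno u hu.2⟩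
  omega

lemma exists_parent {R : SimpleGraph V} {r u : V} (h : R.Reachable r u) (hne : u ≠ r) :
    ∃ w, R.Adj w u ∧ R.dist r w + 1 = R.dist r u := by
  obtain ⟨p, hp⟩ := h.exists_walk_length_eq_dist
  cases hq : p.reverse with
  | nil => exact absurd rfl hne
  | cons h' q =>
    rename_i b
    have hlen : q.length + 1 = R.dist r u := by
      have := congrArg SimpleGraph.Walk.length hq
      rw [SimpleGraph.Walk.length_reverse, hp] at this
      simp at this
      omega
    have hrb : R.Reachable r b := ⟨q.reverse⟩
    have h1 : R.dist r b ≤ q.length := by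
      have := SimpleGraph.dist_le q.reverse
      simpa using this
    obtain ⟨m, hm⟩ := hrb.exists_walk_length_eq_dist
    have h2 : R.dist r u ≤ R.dist r b + 1 := by
      have := SimpleGraph.dist_le (m.concat h'.symm)
      rwa [SimpleGraph.Walk.length_concat, hm] at this
    exact ⟨b, h'.symm, by omega⟩

end Stmt6Aux


section Stmt6Aux2

variable {V : Type*} [Fintype V] [DecidableEq V] {G : SimpleGraph V}

/-- Generic color-pair swap on a set. -/
def swapFun (c : V → ℕ) (S : Set V) (p q : ℕ) : V → ℕ := fun u =>
  if u ∈ S then if c u = p then q else if c u = q then p else c u else c u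

lemma kempeSwap_eq_swapFun (G : SimpleGraph V) (c : V → ℕ) (v : V) (j : ℕ) :
    kempeSwap G c v j = swapFun c (kempeSet G c v j) (c v) j := rfl

lemma ceSwap_eq_swapFun (G : SimpleGraph V) (c : V → ℕ) (v : V) (i j : ℕ) :
    ceSwap G c v i j = swapFun c (ceSet G c v i j) i j := rfl

variable {c : V → ℕ} {S : Set V} {p q : ℕ}

lemma swapFun_not_mem {u : V} (h : u ∉ S) : swapFun c S p q u = c u := if_neg h

lemma swapFun_left {u : V} (h : u ∈ S) (hcu : c u = p) : swapFun c S p q u = q := by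
  unfold swapFun
  rw [if_pos h, if_pos hcu]

lemma swapFun_right (hpq : p ≠ q) {u : V} (h : u ∈ S) (hcu : c u = q) :
    swapFun c S p q u = p := by
  unfold swapFun
  rw [if_pos h, if_neg (fun h' : c u = p => hpq ((h' ▸ hcu).symm ▸ rfl)), if_pos hcu]

lemma swapFun_proper (hprop : ∀ u w, G.Adj u w → c u ≠ c w) (hpq : p ≠ q)
    (hmem : ∀ u ∈ S, c u = p ∨ c u = q)
    (hcl : ∀ u ∈ S, ∀ w, G.Adj u w → c w = p ∨ c w = q → w ∈ S) :
    ∀ u w, G.Adj u w → swapFun c S p q u ≠ swapFun c S p q w := by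
  have key : ∀ u w, G.Adj u w → u ∈ S → swapFun c S p q u ≠ swapFun c S p q w := by
    intro u w hadj hu
    by_cases hw : w ∈ S
    · rcases hmem u hu with h1 | h1 <;> rcases hmem w hw with h2 | h2
      · exact absurd (h1.trans h2.symm) (hprop u w hadj)
      · rw [swapFun_left hu h1, swapFun_right hpq hw h2]
        exact fun e => hpq e.symm
      · rw [swapFun_right hpq hu h1, swapFun_left hw h2]
        exact hpq
      · exact absurd (h1.trans h2.symm) (hprop u w hadj)
    · have hcw : ¬(c w = p ∨ c w = q) := fun h => hw (hcl u hu w hadj h)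
      push_neg at hcw
      rw [swapFun_not_mem hw]
      rcases hmem u hu with h1 | h1
      · rw [swapFun_left hu h1]
        exact fun e => hcw.2 e.symm
      · rw [swapFun_right hpq hu h1]
        exact fun e => hcw.1 e.symm
  intro u w hadj
  by_cases hu : u ∈ S
  · exact key u w hadj hu
  · by_cases hw : w ∈ S
    · exact fun e => key w u (G.adj_symm hadj) hw e.symm
    · rw [swapFun_not_mem hu, swapFun_not_mem hw]
      exact hprop u w hadj

lemma kempeSet_start (G : SimpleGraph V) (c : V → ℕ) (v : V) (j : ℕ) :
    v ∈ kempeSet G c v j :=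
  SimpleGraph.Reachable.refl v

lemma kempeSet_mem {v : V} {j : ℕ} {u : V} (h : u ∈ kempeSet G c v j) :
    c u = c v ∨ c u = j :=
  restrict_reachable_mem (P := {w | c w = c v ∨ c w = j}) (Or.inl rfl) h

lemma kempeSet_closed {v : V} {j : ℕ} {u w : V} (hu : u ∈ kempeSet G c v j)
    (hadj : G.Adj u w) (hw : c w = c v ∨ c w = j) : w ∈ kempeSet G c v j :=
  SimpleGraph.Reachable.trans hu (SimpleGraph.Adj.reachable ⟨hadj, kempeSet_mem hu, hw⟩)

lemma ceSet_mem {v : V} {i j : ℕ} {u : V} (h : u ∈ ceSet G c v i j) :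
    c u = i ∨ c u = j := by
  obtain ⟨w, hadj, hcw, hr⟩ := h
  exact restrict_reachable_mem (P := {x | c x = i ∨ c x = j}) (Or.inl hcw) hr

lemma ceSet_closed {v : V} {i j : ℕ} {u w' : V} (hu : u ∈ ceSet G c v i j)
    (hadj : G.Adj u w') (hw : c w' = i ∨ c w' = j) : w' ∈ ceSet G c v i j := by
  obtain ⟨w, ha, hcw, hr⟩ := hu
  exact ⟨w, ha, hcw, hr.trans (SimpleGraph.Adj.reachable
    ⟨hadj, restrict_reachable_mem (P := {x | c x = i ∨ c x = j}) (Or.inl hcw) hr, hw⟩)⟩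

lemma kempeSet_singleton (hprop : ∀ u w, G.Adj u w → c u ≠ c w) {v : V} {j : ℕ}
    (hj : ∀ u, c u ≠ j) : kempeSet G c v j = {v} := by
  ext u
  simp only [Set.mem_singleton_iff]
  constructor
  · intro h
    obtain ⟨pw⟩ := (h : (restrict G _).Reachable v u)
    cases pw with
    | nil => rfl
    | cons h' _ =>
      rename_i b _
      rcases h'.2.2 with hb | hb
      · exact absurd hb.symm (hprop v b h'.1)
      · exact absurd hb (hj b)
  · rintro rfl
    exact SimpleGraph.Reachable.refl _

lemma fiber_bound {c : V → ℕ} (hc : IsGrundy G c) {w : V} {a : ℕ}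
    (ha1 : 1 ≤ a) (ha2 : a < c w)
    (E : Finset V) (hE1 : E ⊆ G.neighborFinset w) (hE2 : ∀ x ∈ E, c w ≤ c x) :
    ((G.neighborFinset w).filter fun x => c x = a).card + (c w - 2) + E.card
      ≤ G.degree w := by
  classical
  have hfib : ∀ k, 1 ≤ k → k < c w →
      0 < ((G.neighborFinset w).filter fun x => c x = k).card := by
    intro k h1 h2
    obtain ⟨u, hu, hcu⟩ := hc.exists_nbr h1 h2
    exact Finset.card_pos.mpr ⟨u, Finset.mem_filter.mpr
      ⟨(G.mem_neighborFinset w u).mpr hu, hcu⟩⟩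
  set U := (Finset.Icc 1 (c w - 1)).biUnion
    (fun k => (G.neighborFinset w).filter fun x => c x = k) with hU
  have hUcard : U.card = ∑ k ∈ Finset.Icc 1 (c w - 1),
      ((G.neighborFinset w).filter fun x => c x = k).card := by
    apply Finset.card_biUnion
    intro k1 h1 k2 h2 hne
    simp only [Finset.disjoint_left, Finset.mem_filter]
    rintro x ⟨-, hx1⟩ ⟨-, hx2⟩
    exact hne (hx1 ▸ hx2 ▸ rfl)
  have hmemIcc : a ∈ Finset.Icc 1 (c w - 1) := by
    rw [Finset.mem_Icc]
    omega
  have hsum : ((G.neighborFinset w).filter fun x => c x = a).card + (c w - 2)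
      ≤ U.card := by
    rw [hUcard, ← Finset.add_sum_erase _ _ hmemIcc]
    have h1 : ((Finset.Icc 1 (c w - 1)).erase a).card ≤
        ∑ k ∈ (Finset.Icc 1 (c w - 1)).erase a,
          ((G.neighborFinset w).filter fun x => c x = k).card := by
      rw [Finset.card_eq_sum_ones]
      apply Finset.sum_le_sum
      intro k hk
      have hk' := Finset.mem_of_mem_erase hk
      rw [Finset.mem_Icc] at hk'
      exact hfib k hk'.1 (by omega)
    have h2 : ((Finset.Icc 1 (c w - 1)).erase a).card = c w - 2 := by
      rw [Finset.card_erase_of_mem hmemIcc, Nat.card_Icc]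
      omega
    omega
  have hdisj : Disjoint U E := by
    rw [Finset.disjoint_left]
    intro x hx hxE
    rw [hU, Finset.mem_biUnion] at hx
    obtain ⟨k, hk, hk2⟩ := hx
    rw [Finset.mem_Icc] at hk
    rw [Finset.mem_filter] at hk2
    have := hE2 x hxE
    omega
  have hsub : U ∪ E ⊆ G.neighborFinset w := by
    apply Finset.union_subset _ hE1
    intro x hx
    rw [hU, Finset.mem_biUnion] at hx
    obtain ⟨k, -, hk⟩ := hx
    exact Finset.mem_of_mem_filter x hk
  have hcard := Finset.card_le_card hsub
  rw [Finset.card_union_of_disjoint hdisj] at hcard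
  have hdeg : (G.neighborFinset w).card = G.degree w :=
    G.card_neighborFinset_eq_degree w
  omega

lemma sv_lemma {Δ : ℕ} (hΔ : Δ = G.maxDegree) {c z : V → ℕ}
    (hc : IsGrundy G c) (hz : IsGrundy G z) (v0 : V)
    (hle : ∀ u, u ≠ v0 → z u ≤ c u)
    (hdrop : colorCount z (Δ + 1) < colorCount c (Δ + 1)) :
    (Finset.univ.filter fun u => Δ ≤ z u).card ≤
      (Finset.univ.filter fun u => Δ ≤ c u).card := by
  classical
  by_cases hv0 : Δ ≤ c v0
  · apply Finset.card_le_card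
    intro u hu
    rw [Finset.mem_filter] at hu ⊢
    refine ⟨Finset.mem_univ u, ?_⟩
    rcases eq_or_ne u v0 with rfl | hne
    · exact hv0
    · exact le_trans hu.2 (hle u hne)
  · by_cases hzv0 : Δ ≤ z v0
    swap
    · apply Finset.card_le_card
      intro u hu
      rw [Finset.mem_filter] at hu ⊢
      refine ⟨Finset.mem_univ u, ?_⟩
      rcases eq_or_ne u v0 with rfl | hne
      · exact absurd hu.2 hzv0
      · exact le_trans hu.2 (hle u hne)
    · push_neg at hv0
      obtain ⟨u0, hcu0, hzu0⟩ := exists_dropper hdrop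
      have hu0v0 : u0 ≠ v0 := by
        intro h
        rw [h] at hcu0
        omega
      have hv0HSc : v0 ∉ Finset.univ.filter fun u => Δ ≤ c u := by
        rw [Finset.mem_filter]
        push_neg
        intro
        omega
      have hsub : (Finset.univ.filter fun u => Δ ≤ z u) ⊆
          insert v0 (Finset.univ.filter fun u => Δ ≤ c u) := by
        intro u hu
        rw [Finset.mem_filter] at hu
        rcases eq_or_ne u v0 with rfl | hne
        · exact Finset.mem_insert_self u _
        · exact Finset.mem_insert_of_mem (Finset.mem_filter.mpr
            ⟨Finset.mem_univ u, le_trans hu.2 (hle u hne)⟩)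
      by_contra hgt
      push_neg at hgt
      have hinscard : (insert v0 (Finset.univ.filter fun u => Δ ≤ c u)).card =
          (Finset.univ.filter fun u => Δ ≤ c u).card + 1 :=
        Finset.card_insert_of_notMem hv0HSc
      have heq : (Finset.univ.filter fun u => Δ ≤ z u) =
          insert v0 (Finset.univ.filter fun u => Δ ≤ c u) := by
        apply Finset.eq_of_subset_of_card_le hsub
        omega
      have hsupset : ∀ u, Δ ≤ c u → Δ ≤ z u := by
        intro u hu
        have : u ∈ insert v0 (Finset.univ.filter fun u => Δ ≤ c u) :=
          Finset.mem_insert_of_mem (Finset.mem_filter.mpr ⟨Finset.mem_univ u, hu⟩)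
        rw [← heq, Finset.mem_filter] at this
        exact this.2
      have hΔ2 : 2 ≤ Δ := by
        have := hc.one_le v0
        omega
      have hu0z : z u0 = Δ := by
        have h2 := hsupset u0 (by omega)
        have h3 := hle u0 hu0v0
        omega
      obtain ⟨w0, hw0adj, hw0c⟩ := hc.exists_nbr (v := u0) (k := Δ)
        (by omega) (by omega)
      have hzw0 : z w0 ≠ Δ := by
        intro h
        exact hz.proper u0 w0 hw0adj (hu0z.trans h.symm)
      have hw0v0 : w0 ≠ v0 := by
        intro h
        rw [h] at hw0c
        omega
      have h5 := hsupset w0 (le_of_eq hw0c.symm)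
      have h6 := hle w0 hw0v0
      omega

end Stmt6Aux2


section Stmt6MS

variable {V : Type*} [Fintype V] [DecidableEq V] {G : SimpleGraph V}

lemma ms_lemma {Δ a : ℕ} (hΔ : Δ = G.maxDegree) {c z : V → ℕ}
    (hc : IsGrundy G c) (hz : IsGrundy G z)
    {S : Set V} {r0 : V}
    (ha1 : 1 ≤ a) (ha2 : a < Δ)
    (hmem : ∀ u ∈ S, c u = a ∨ c u = Δ)
    (hcl : ∀ u ∈ S, ∀ w, G.Adj u w → c w = a ∨ c w = Δ → w ∈ S)
    (hr0 : r0 ∈ S)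
    (hconn : ∀ u ∈ S, (restrict G {w | c w = a ∨ c w = Δ}).Reachable r0 u)
    (hz1 : ∀ u, u ∉ S → z u ≤ c u)
    (hz2 : ∀ u ∈ S, c u = Δ → z u ≤ a)
    (hz3 : ∀ u ∈ S, c u = a → z u ≤ Δ)
    (hdrop : colorCount z (Δ + 1) < colorCount c (Δ + 1)) :
    (Finset.univ.filter fun u => Δ ≤ z u).card ≤
      (Finset.univ.filter fun u => Δ ≤ c u).card := by
  classical
  have hpc := hc.proper
  have hpz := hz.proper
  have hΔ2 : 2 ≤ Δ := by omega
  set R := restrict G {w | c w = a ∨ c w = Δ} with hR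
  set A : Finset V := Finset.univ.filter (fun u => u ∈ S ∧ c u = a) with hA
  set B : Finset V := Finset.univ.filter (fun u => u ∈ S ∧ c u = Δ) with hB
  set HSz : Finset V := Finset.univ.filter (fun u => Δ ≤ z u) with hHSz
  set HSc : Finset V := Finset.univ.filter (fun u => Δ ≤ c u) with hHSc
  set T : Finset V := HSc \ B with hT
  have hreach : ∀ r ∈ S, ∀ u ∈ S, R.Reachable r u := fun r hr u hu =>
    (hconn r hr).symm.trans (hconn u hu)
  -- the fiber of color a at a vertex w
  have hfiber2 : ∀ w, c w = Δ →
      ((G.neighborFinset w).filter fun x => c x = a).card ≤ 2 := by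
    intro w hw
    have := fiber_bound hc (w := w) ha1 (show a < c w by omega) (∅ : Finset V)
      (Finset.empty_subset _) (by intro x hx; exact absurd hx (Finset.notMem_empty x))
    have hdeg := G.degree_le_maxDegree w
    omega
  have hfiber1 : ∀ w, c w = Δ → ∀ x0, G.Adj w x0 → c x0 = Δ + 1 →
      ((G.neighborFinset w).filter fun x => c x = a).card ≤ 1 := by
    intro w hw x0 hadj hx0
    have := fiber_bound hc ha1 (show a < c w by omega) ({x0} : Finset V)
      (by intro x hx
          rw [Finset.mem_singleton] at hx
          rw [hx, G.mem_neighborFinset]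
          exact hadj)
      (by intro x hx
          rw [Finset.mem_singleton] at hx
          rw [hx]
          omega)
    have hdeg := G.degree_le_maxDegree w
    rw [Finset.card_singleton] at this
    omega
  -- main injection construction for any a-colored root
  have hmain : ∀ r, r ∈ S → c r = a → ∃ g : V → V,
      (∀ u, u ∈ A → u ≠ r →
        g u ∈ B ∧ G.Adj (g u) u ∧ R.dist r (g u) + 1 = R.dist r u) ∧
      (∀ u1, u1 ∈ A → u1 ≠ r → ∀ u2, u2 ∈ A → u2 ≠ r → g u1 = g u2 → u1 = u2) := by
    intro r hrS hcr
    have hex : ∀ u : V, ∃ w : V, u ∈ A → u ≠ r →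
        (R.Adj w u ∧ R.dist r w + 1 = R.dist r u) := by
      intro u
      by_cases hu : u ∈ A ∧ u ≠ r
      · rw [hA, Finset.mem_filter] at hu
        obtain ⟨w, hw⟩ := exists_parent (hreach r hrS u hu.1.2.1) hu.2
        exact ⟨w, fun _ _ => hw⟩
      · exact ⟨r, fun h1 h2 => absurd ⟨h1, h2⟩ hu⟩
    choose g hg using hex
    have hprops : ∀ u, u ∈ A → u ≠ r →
        g u ∈ B ∧ G.Adj (g u) u ∧ R.dist r (g u) + 1 = R.dist r u := by
      intro u huA hur
      obtain ⟨hadj, hdist⟩ := hg u huA hur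
      have hmemA := huA
      rw [hA, Finset.mem_filter] at hmemA
      have hGadj : G.Adj (g u) u := hadj.1
      have hgP : c (g u) = a ∨ c (g u) = Δ := hadj.2.1
      have hgS : g u ∈ S := hcl u hmemA.2.1 (g u) (G.adj_symm hGadj) hgP
      have hgΔ : c (g u) = Δ := by
        rcases hgP with h' | h'
        · exact absurd (h'.trans hmemA.2.2.symm) (hpc (g u) u hGadj)
        · exact h'
      exact ⟨by rw [hB, Finset.mem_filter]; exact ⟨Finset.mem_univ _, hgS, hgΔ⟩,
        hGadj, hdist⟩
    refine ⟨g, hprops, ?_⟩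
    intro u1 h1A h1r u2 h2A h2r hgeq
    by_contra hne
    obtain ⟨hw1B, hw1adj, hw1d⟩ := hprops u1 h1A h1r
    obtain ⟨hw2B, hw2adj, hw2d⟩ := hprops u2 h2A h2r
    set w := g u1 with hw
    rw [← hgeq] at hw2adj hw2d
    have hwB := hw1B
    rw [hB, Finset.mem_filter] at hwB
    have hwr : w ≠ r := by
      intro h
      rw [h] at hwB
      rw [hcr] at hwB
      omega
    obtain ⟨w', hw'adj, hw'd⟩ := exists_parent (hreach r hrS w hwB.2.1) hwr
    have hw'a : c w' = a := by
      rcases hw'adj.2.1 with h' | h'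
      · exact h'
      · exact absurd (h'.trans hwB.2.2.symm) (hpc w' w hw'adj.1)
    have h1a : c u1 = a := by
      rw [hA, Finset.mem_filter] at h1A
      exact h1A.2.2
    have h2a : c u2 = a := by
      rw [hA, Finset.mem_filter] at h2A
      exact h2A.2.2
    have hw'u1 : w' ≠ u1 := by
      intro h
      rw [h] at hw'd
      omega
    have hw'u2 : w' ≠ u2 := by
      intro h
      rw [h] at hw'd
      omega
    have htriple : ({u1, u2, w'} : Finset V) ⊆
        (G.neighborFinset w).filter fun x => c x = a := by
      intro x hx
      rw [Finset.mem_insert, Finset.mem_insert, Finset.mem_singleton] at hx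
      rw [Finset.mem_filter, G.mem_neighborFinset]
      rcases hx with rfl | rfl | rfl
      · exact ⟨hw1adj, h1a⟩
      · exact ⟨hw2adj, h2a⟩
      · exact ⟨G.adj_symm hw'adj.1, hw'a⟩
    have hcard3 : ({u1, u2, w'} : Finset V).card = 3 := by
      rw [Finset.card_insert_of_notMem, Finset.card_insert_of_notMem,
        Finset.card_singleton]
      · rw [Finset.mem_singleton]
        exact fun h => hw'u2 h.symm
      · rw [Finset.mem_insert, Finset.mem_singleton]
        push_neg
        exact ⟨hne, fun h => hw'u1 h.symm⟩
    have := Finset.card_le_card htriple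
    have := hfiber2 w hwB.2.2
    omega
  -- decomposition of HSz
  have hsplit : HSz.card ≤ (HSz ∩ T).card + (HSz ∩ A).card := by
    have hsub : HSz ⊆ (HSz ∩ T) ∪ (HSz ∩ A) := by
      intro u hu
      have hu' := hu
      rw [hHSz, Finset.mem_filter] at hu'
      rw [Finset.mem_union, Finset.mem_inter, Finset.mem_inter]
      by_cases huS : u ∈ S
      · rcases hmem u huS with h' | h'
        · exact Or.inr ⟨hu, by rw [hA, Finset.mem_filter]; exact ⟨Finset.mem_univ _, huS, h'⟩⟩
        · have := hz2 u huS h'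
          omega
      · have hzc := hz1 u huS
        refine Or.inl ⟨hu, ?_⟩
        rw [hT, Finset.mem_sdiff]
        constructor
        · rw [hHSc, Finset.mem_filter]
          exact ⟨Finset.mem_univ _, by omega⟩
        · rw [hB, Finset.mem_filter]
          push_neg
          intro _ h'
          exact absurd h' huS
    exact le_trans (Finset.card_le_card hsub) (Finset.card_union_le _ _)
  have hBHSc : B ⊆ HSc := by
    intro u hu
    rw [hB, Finset.mem_filter] at hu
    rw [hHSc, Finset.mem_filter]
    exact ⟨Finset.mem_univ _, by omega⟩
  have hTcard : T.card + B.card = HSc.card := by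
    rw [hT, Finset.card_sdiff_of_subset hBHSc]
    have := Finset.card_le_card hBHSc
    omega
  have hTsub : HSz ∩ T ⊆ T := Finset.inter_subset_right
  have hAsub : HSz ∩ A ⊆ A := Finset.inter_subset_right
  by_cases hallA : ∀ u ∈ A, Δ ≤ z u
  swap
  · -- some a-vertex of S ends low: use it as root
    push_neg at hallA
    obtain ⟨r, hrA, hrz⟩ := hallA
    have hrA' := hrA
    rw [hA, Finset.mem_filter] at hrA'
    obtain ⟨g, hgp, hginj⟩ := hmain r hrA'.2.1 hrA'.2.2
    have hXr : ∀ u ∈ HSz ∩ A, u ≠ r := by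
      intro u hu h
      rw [Finset.mem_inter, hHSz, Finset.mem_filter] at hu
      rw [h] at hu
      omega
    have hXB : (HSz ∩ A).card ≤ B.card := by
      apply Finset.card_le_card_of_injOn g
      · intro u hu
        exact (hgp u (hAsub hu) (hXr u hu)).1
      · intro u1 h1 u2 h2 heq
        rw [Finset.mem_coe] at h1 h2
        exact hginj u1 (hAsub h1) (hXr u1 h1) u2 (hAsub h2) (hXr u2 h2) heq
    have h1 := Finset.card_le_card hTsub
    omega
  · by_cases hAne : A.Nonempty
    swap
    · have hA0 : (HSz ∩ A).card = 0 := by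
        rw [Finset.card_eq_zero]
        rw [Finset.not_nonempty_iff_eq_empty] at hAne
        rw [hAne]
        exact Finset.inter_empty HSz
      have h1 := Finset.card_le_card hTsub
      omega
    · obtain ⟨r, hrA⟩ := hAne
      have hrA' := hrA
      rw [hA, Finset.mem_filter] at hrA'
      obtain ⟨g, hgp, hginj⟩ := hmain r hrA'.2.1 hrA'.2.2
      have herase : (A.erase r).card ≤ B.card := by
        apply Finset.card_le_card_of_injOn g
        · intro u hu
          exact (hgp u (Finset.mem_of_mem_erase hu) (Finset.ne_of_mem_erase hu)).1
        · intro u1 h1 u2 h2 heq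
          rw [Finset.mem_coe] at h1 h2
          exact hginj u1 (Finset.mem_of_mem_erase h1) (Finset.ne_of_mem_erase h1)
            u2 (Finset.mem_of_mem_erase h2) (Finset.ne_of_mem_erase h2) heq
      have hAcard : A.card ≤ B.card + 1 := by
        have := Finset.card_erase_of_mem hrA
        omega
      by_cases hAB : A.card ≤ B.card
      · have h1 := Finset.card_le_card hTsub
        have h2 := Finset.card_le_card hAsub
        omega
      · have hAeq : A.card = B.card + 1 := by omega
        by_cases hTlt : (HSz ∩ T).card < T.card
        · have h2 := Finset.card_le_card hAsub
          omega
        · exfalso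
          have hTfull : T ⊆ HSz := by
            have heq : HSz ∩ T = T := Finset.eq_of_subset_of_card_le hTsub (by omega)
            intro u hu
            have : u ∈ HSz ∩ T := by rw [heq]; exact hu
            exact (Finset.mem_inter.mp this).1
          obtain ⟨u0, hcu0, hzu0⟩ := exists_dropper hdrop
          have hu0S : u0 ∉ S := by
            intro h
            rcases hmem u0 h with h' | h' <;> omega
          have hu0T : u0 ∈ T := by
            rw [hT, Finset.mem_sdiff, hHSc, Finset.mem_filter, hB, Finset.mem_filter]
            refine ⟨⟨Finset.mem_univ _, by omega⟩, ?_⟩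
            push_neg
            intro _ h'
            exact absurd h' hu0S
          have hzu0Δ : z u0 = Δ := by
            have h1 := hTfull hu0T
            rw [hHSz, Finset.mem_filter] at h1
            have h2 := hz1 u0 hu0S
            omega
          obtain ⟨w0, hw0adj, hw0c⟩ := hc.exists_nbr (v := u0) (k := Δ)
            (by omega) (by omega)
          have hzw0 : z w0 ≠ Δ := by
            intro h
            exact hpz u0 w0 hw0adj (hzu0Δ.trans h.symm)
          by_cases hw0S : w0 ∈ S
          · -- w0 ∈ B; surjectivity of g gives two a-neighbors, contradiction
            have hw0B : w0 ∈ B := by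
              rw [hB, Finset.mem_filter]
              exact ⟨Finset.mem_univ _, hw0S, hw0c⟩
            have himg : (A.erase r).image g = B := by
              apply Finset.eq_of_subset_of_card_le
              · intro x hx
                rw [Finset.mem_image] at hx
                obtain ⟨u, hu, rfl⟩ := hx
                exact (hgp u (Finset.mem_of_mem_erase hu) (Finset.ne_of_mem_erase hu)).1
              · rw [Finset.card_image_of_injOn]
                · have := Finset.card_erase_of_mem hrA
                  omega
                · intro u1 h1 u2 h2 heq
                  rw [Finset.mem_coe] at h1 h2
                  exact hginj u1 (Finset.mem_of_mem_erase h1) (Finset.ne_of_mem_erase h1)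
                    u2 (Finset.mem_of_mem_erase h2) (Finset.ne_of_mem_erase h2) heq
            obtain ⟨u1, hu1, hgu1⟩ := Finset.mem_image.mp (himg ▸ hw0B)
            obtain ⟨-, hu1adj, hu1d⟩ := hgp u1 (Finset.mem_of_mem_erase hu1)
              (Finset.ne_of_mem_erase hu1)
            rw [hgu1] at hu1adj hu1d
            have hw0r : w0 ≠ r := by
              intro h
              rw [h] at hw0c
              rw [hrA'.2.2] at hw0c
              omega
            obtain ⟨w', hw'adj, hw'd⟩ := exists_parent (hreach r hrA'.2.1 w0 hw0S) hw0r
            have hw'a : c w' = a := by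
              rcases hw'adj.2.1 with h' | h'
              · exact h'
              · exact absurd (h'.trans hw0c.symm) (hpc w' w0 hw'adj.1)
            have hu1a : c u1 = a := by
              have := Finset.mem_of_mem_erase hu1
              rw [hA, Finset.mem_filter] at this
              exact this.2.2
            have hw'u1 : w' ≠ u1 := by
              intro h
              rw [h] at hw'd
              omega
            have hpair : ({u1, w'} : Finset V) ⊆
                (G.neighborFinset w0).filter fun x => c x = a := by
              intro x hx
              rw [Finset.mem_insert, Finset.mem_singleton] at hx
              rw [Finset.mem_filter, G.mem_neighborFinset]
              rcases hx with rfl | rfl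
              · exact ⟨hu1adj, hu1a⟩
              · exact ⟨G.adj_symm hw'adj.1, hw'a⟩
            have hcard2 : ({u1, w'} : Finset V).card = 2 := by
              rw [Finset.card_insert_of_notMem, Finset.card_singleton]
              rw [Finset.mem_singleton]
              exact fun h => hw'u1 h.symm
            have := Finset.card_le_card hpair
            have := hfiber1 w0 hw0c u0 (G.adj_symm hw0adj) hcu0
            omega
          · -- w0 ∉ S: then w0 ∈ T so z w0 = Δ, contradiction
            have hw0T : w0 ∈ T := by
              rw [hT, Finset.mem_sdiff, hHSc, Finset.mem_filter, hB, Finset.mem_filter]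
              refine ⟨⟨Finset.mem_univ _, by omega⟩, ?_⟩
              push_neg
              intro _ h'
              exact absurd h' hw0S
            have h1 := hTfull hw0T
            rw [hHSz, Finset.mem_filter] at h1
            have h2 := hz1 w0 hw0S
            omega

end Stmt6MS


section Stmt6MS2

variable {V : Type*} [Fintype V] [DecidableEq V] {G : SimpleGraph V}

lemma ms2_lemma {Δ a : ℕ} (hΔ : Δ = G.maxDegree) {c z : V → ℕ}
    (hc : IsGrundy G c) (hz : IsGrundy G z)
    {S : Set V} {r0 : V}
    (ha1 : 1 ≤ a) (ha2 : a < Δ)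
    (hmem : ∀ u ∈ S, c u = a ∨ c u = Δ + 1)
    (hcl : ∀ u ∈ S, ∀ w, G.Adj u w → c w = a ∨ c w = Δ + 1 → w ∈ S)
    (hr0 : r0 ∈ S)
    (hconn : ∀ u ∈ S, (restrict G {w | c w = a ∨ c w = Δ + 1}).Reachable r0 u)
    (hz1 : ∀ u, u ∉ S → z u ≤ c u)
    (hz2 : ∀ u ∈ S, c u = Δ + 1 → z u ≤ a)
    (hdrop : colorCount z (Δ + 1) < colorCount c (Δ + 1)) :
    (Finset.univ.filter fun u => Δ ≤ z u).card ≤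
      (Finset.univ.filter fun u => Δ ≤ c u).card := by
  classical
  have hpc := hc.proper
  have hpz := hz.proper
  have hΔ2 : 2 ≤ Δ := by omega
  set R := restrict G {w | c w = a ∨ c w = Δ + 1} with hR
  set A : Finset V := Finset.univ.filter (fun u => u ∈ S ∧ c u = a) with hA
  set B : Finset V := Finset.univ.filter (fun u => u ∈ S ∧ c u = Δ + 1) with hB
  set HSz : Finset V := Finset.univ.filter (fun u => Δ ≤ z u) with hHSz
  set HSc : Finset V := Finset.univ.filter (fun u => Δ ≤ c u) with hHSc
  set T : Finset V := HSc \ B with hT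
  have hreach : ∀ r ∈ S, ∀ u ∈ S, R.Reachable r u := fun r hr u hu =>
    (hconn r hr).symm.trans (hconn u hu)
  have hfiber1 : ∀ w, c w = Δ + 1 →
      ((G.neighborFinset w).filter fun x => c x = a).card ≤ 1 := by
    intro w hw
    have := fiber_bound hc (w := w) ha1 (show a < c w by omega) (∅ : Finset V)
      (Finset.empty_subset _) (by intro x hx; exact absurd hx (Finset.notMem_empty x))
    have hdeg := G.degree_le_maxDegree w
    omega
  -- A has at most one element
  have hAone : ∀ r, r ∈ A → ∀ u, u ∈ A → u = r := by
    intro r hrA u huA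
    by_contra hne
    have hrA' := hrA
    rw [hA, Finset.mem_filter] at hrA'
    have huA' := huA
    rw [hA, Finset.mem_filter] at huA'
    obtain ⟨w, hwadj, hwd⟩ := exists_parent (hreach r hrA'.2.1 u huA'.2.1) hne
    have hwGadj : G.Adj w u := hwadj.1
    have hwP : c w = a ∨ c w = Δ + 1 := hwadj.2.1
    have hwS : w ∈ S := hcl u huA'.2.1 w (G.adj_symm hwGadj) hwP
    have hwΔ : c w = Δ + 1 := by
      rcases hwP with h' | h'
      · exact absurd (h'.trans huA'.2.2.symm) (hpc w u hwGadj)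
      · exact h'
    have hwr : w ≠ r := by
      intro h
      rw [h, hrA'.2.2] at hwΔ
      omega
    obtain ⟨w', hw'adj, hw'd⟩ := exists_parent (hreach r hrA'.2.1 w hwS) hwr
    have hw'a : c w' = a := by
      rcases hw'adj.2.1 with h' | h'
      · exact h'
      · exact absurd (h'.trans hwΔ.symm) (hpc w' w hw'adj.1)
    have hw'u : w' ≠ u := by
      intro h
      rw [h] at hw'd
      omega
    have hpair : ({u, w'} : Finset V) ⊆
        (G.neighborFinset w).filter fun x => c x = a := by
      intro x hx
      rw [Finset.mem_insert, Finset.mem_singleton] at hx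
      rw [Finset.mem_filter, G.mem_neighborFinset]
      rcases hx with rfl | rfl
      · exact ⟨hwGadj, huA'.2.2⟩
      · exact ⟨G.adj_symm hw'adj.1, hw'a⟩
    have hcard2 : ({u, w'} : Finset V).card = 2 := by
      rw [Finset.card_insert_of_notMem, Finset.card_singleton]
      rw [Finset.mem_singleton]
      exact fun h => hw'u h.symm
    have := Finset.card_le_card hpair
    have := hfiber1 w hwΔ
    omega
  have hsplit : HSz.card ≤ (HSz ∩ T).card + (HSz ∩ A).card := by
    have hsub : HSz ⊆ (HSz ∩ T) ∪ (HSz ∩ A) := by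
      intro u hu
      have hu' := hu
      rw [hHSz, Finset.mem_filter] at hu'
      rw [Finset.mem_union, Finset.mem_inter, Finset.mem_inter]
      by_cases huS : u ∈ S
      · rcases hmem u huS with h' | h'
        · exact Or.inr ⟨hu, by rw [hA, Finset.mem_filter]; exact ⟨Finset.mem_univ _, huS, h'⟩⟩
        · have := hz2 u huS h'
          omega
      · have hzc := hz1 u huS
        refine Or.inl ⟨hu, ?_⟩
        rw [hT, Finset.mem_sdiff]
        constructor
        · rw [hHSc, Finset.mem_filter]
          exact ⟨Finset.mem_univ _, by omega⟩
        · rw [hB, Finset.mem_filter]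
          push_neg
          intro _ h'
          exact absurd h' huS
    exact le_trans (Finset.card_le_card hsub) (Finset.card_union_le _ _)
  have hBHSc : B ⊆ HSc := by
    intro u hu
    rw [hB, Finset.mem_filter] at hu
    rw [hHSc, Finset.mem_filter]
    exact ⟨Finset.mem_univ _, by omega⟩
  have hTcard : T.card + B.card = HSc.card := by
    rw [hT, Finset.card_sdiff_of_subset hBHSc]
    have := Finset.card_le_card hBHSc
    omega
  have hTsub : HSz ∩ T ⊆ T := Finset.inter_subset_right
  have hAsub : HSz ∩ A ⊆ A := Finset.inter_subset_right
  by_cases hAne : A.Nonempty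
  swap
  · have hA0 : (HSz ∩ A).card = 0 := by
      rw [Finset.card_eq_zero]
      rw [Finset.not_nonempty_iff_eq_empty] at hAne
      rw [hAne]
      exact Finset.inter_empty HSz
    have h1 := Finset.card_le_card hTsub
    omega
  · obtain ⟨r, hrA⟩ := hAne
    have hAr : A = {r} := by
      apply Finset.eq_singleton_iff_unique_mem.mpr
      exact ⟨hrA, fun u hu => hAone r hrA u hu⟩
    by_cases hBne : B.Nonempty
    · have hB1 : 1 ≤ B.card := Finset.card_pos.mpr hBne
      have h1 := Finset.card_le_card hTsub
      have h2 : (HSz ∩ A).card ≤ 1 := by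
        refine le_trans (Finset.card_le_card hAsub) ?_
        rw [hAr]
        exact le_of_eq (Finset.card_singleton r)
      omega
    · -- B empty: S = {r}, single-vertex case
      rw [Finset.not_nonempty_iff_eq_empty] at hBne
      have hSr : ∀ u, u ∈ S → u = r := by
        intro u huS
        rcases hmem u huS with h' | h'
        · exact hAone r hrA u (by rw [hA, Finset.mem_filter]; exact ⟨Finset.mem_univ _, huS, h'⟩)
        · exfalso
          have : u ∈ B := by
            rw [hB, Finset.mem_filter]
            exact ⟨Finset.mem_univ _, huS, h'⟩
          rw [hBne] at this
          exact absurd this (Finset.notMem_empty u)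
      exact sv_lemma hΔ hc hz r (fun u hu => hz1 u (fun h => hu (hSr u h))) hdrop

end Stmt6MS2

/-- Let `G` be a finite simple graph with maximum degree `Δ` and let `c` be
a Grundy coloring of `G`. Let `y` be obtained from `c` by a Kempe chain operation or by a
color elimination, and let `z` be a Grundy coloring obtained from `y` by a run of Grundy
local search. If `z ⪰ c`, then the number of vertices that `z` colors `Δ` or `Δ + 1` is at
most the number of vertices that `c` colors `Δ` or `Δ + 1`. -/
theorem stmt6 {V : Type*} [Fintype V] [DecidableEq V] (G : SimpleGraph V)
    (Δ : ℕ) (hΔ : Δ = G.maxDegree) (c : V → ℕ) (hc : IsGrundy G c)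
    (y z : V → ℕ)
    (hy : (∃ v j, y = kempeSwap G c v j) ∨
      (∃ v i j, 3 ≤ c v ∧ i ≠ j ∧ 1 ≤ i ∧ i ≤ c v - 1 ∧ 1 ≤ j ∧ j ≤ c v - 1 ∧
        y = ceSwap G c v i j))
    (hz : glsRun G y z) (hpref : Pref G z c) :
    (Finset.univ.filter fun v => z v = Δ ∨ z v = Δ + 1).card ≤
      (Finset.univ.filter fun v => c v = Δ ∨ c v = Δ + 1).card := by
  classical
  obtain ⟨hrun, hzg⟩ := hz
  have hpc := hc.proper
  have hpz := hzg.proper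
  have hcleΔ : ∀ u, c u ≤ Δ + 1 := hc.le_maxDegree_succ hΔ
  have hzleΔ : ∀ u, z u ≤ Δ + 1 := hzg.le_maxDegree_succ hΔ
  have hgz : (Finset.univ.filter fun u => z u = Δ ∨ z u = Δ + 1) =
      (Finset.univ.filter fun u => Δ ≤ z u) := by
    ext u
    simp only [Finset.mem_filter, Finset.mem_univ, true_and]
    have := hzleΔ u
    omega
  have hgc : (Finset.univ.filter fun u => c u = Δ ∨ c u = Δ + 1) =
      (Finset.univ.filter fun u => Δ ≤ c u) := by
    ext u
    simp only [Finset.mem_filter, Finset.mem_univ, true_and]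
    have := hcleΔ u
    omega
  rw [hgz, hgc]
  have hcount : ∀ x : V → ℕ, (∀ u, x u ≤ Δ + 1) →
      (Finset.univ.filter fun u => Δ ≤ x u).card =
        colorCount x Δ + colorCount x (Δ + 1) := by
    intro x hx
    unfold colorCount
    rw [← Finset.card_union_of_disjoint]
    · congr 1
      ext u
      simp only [Finset.mem_union, Finset.mem_filter, Finset.mem_univ, true_and]
      have := hx u
      omega
    · rw [Finset.disjoint_left]
      intro u h1 h2
      rw [Finset.mem_filter] at h1 h2
      omega
  have hconf0 : ∀ x : V → ℕ, (∀ u w, G.Adj u w → x u ≠ x w) →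
      numConflicts G x = 0 := by
    intro x hx
    have hemp : conflictSet G x = ∅ := by
      rw [Set.eq_empty_iff_forall_notMem]
      rintro e ⟨he, u, w, rfl, heq⟩
      rw [SimpleGraph.mem_edgeSet] at he
      exact hx u w he heq
    rw [numConflicts, hemp, Set.ncard_empty]
  rcases hpref with hlt | ⟨-, hprof⟩
  · rw [hconf0 z hpz, hconf0 c hpc] at hlt
    omega
  rcases hprof with hall | ⟨i, hi, habove⟩
  · rw [hcount z hzleΔ, hcount c hcleΔ, hall Δ, hall (Δ + 1)]
  rcases lt_trichotomy i (Δ + 1) with hiΔ | rfl | hiΔ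
  · -- i ≤ Δ
    rw [hcount z hzleΔ, hcount c hcleΔ]
    have h1 : colorCount z (Δ + 1) = colorCount c (Δ + 1) := habove (Δ + 1) (by omega)
    have h2 : colorCount z Δ ≤ colorCount c Δ := by
      rcases eq_or_lt_of_le (show i ≤ Δ by omega) with rfl | h'
      · exact le_of_lt hi
      · exact le_of_eq (habove Δ h')
    omega
  swap
  · -- i > Δ + 1 : impossible
    exfalso
    have hpos : 0 < colorCount c i := by omega
    rw [colorCount, Finset.card_pos] at hpos
    obtain ⟨u, hu⟩ := hpos
    rw [Finset.mem_filter] at hu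
    have := hcleΔ u
    omega
  -- the hard case : i = Δ + 1
  have hdrop : colorCount z (Δ + 1) < colorCount c (Δ + 1) := hi
  have hmono : (∀ u, Δ ≤ z u → Δ ≤ c u) →
      (Finset.univ.filter fun u => Δ ≤ z u).card ≤
        (Finset.univ.filter fun u => Δ ≤ c u).card := by
    intro h
    apply Finset.card_le_card
    intro u hu
    rw [Finset.mem_filter] at hu ⊢
    exact ⟨hu.1, h u hu.2⟩
  rcases hy with ⟨v, j, hy⟩ | ⟨v, ii, jj, hv3, hij, hii1, hii2, hjj1, hjj2, hy⟩
  · -- Kempe chain case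
    subst hy
    by_cases hjp : j = c v
    · -- trivial swap
      have hyc : kempeSwap G c v j = c := by
        funext u
        unfold kempeSwap
        split
        · split
          · rename_i h1 h2
            omega
          · split
            · rename_i h1 h2 h3
              omega
            · rfl
        · rfl
      rw [hyc] at hrun
      rw [gls_fixed hc hrun]
    · have hpq : c v ≠ j := fun h => hjp h.symm
      have hyprop : ∀ u w, G.Adj u w → kempeSwap G c v j u ≠ kempeSwap G c v j w := by
        rw [kempeSwap_eq_swapFun]
        exact swapFun_proper hpc hpq (fun u hu => kempeSet_mem hu)
          (fun u hu w hadj hw => kempeSet_closed hu hadj hw)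
      have hglsle := gls_le hyprop hrun
      have hyout : ∀ u, u ∉ kempeSet G c v j → kempeSwap G c v j u = c u :=
        fun u hu => by rw [kempeSwap_eq_swapFun]; exact swapFun_not_mem hu
      have hypv : ∀ u, u ∈ kempeSet G c v j → c u = c v → kempeSwap G c v j u = j :=
        fun u hu h => by rw [kempeSwap_eq_swapFun]; exact swapFun_left hu h
      have hyqv : ∀ u, u ∈ kempeSet G c v j → c u = j → kempeSwap G c v j u = c v :=
        fun u hu h => by rw [kempeSwap_eq_swapFun]; exact swapFun_right hpq hu h
      by_cases hj0 : j = 0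
      · -- singleton Kempe set
        have hSsing : kempeSet G c v j = {v} :=
          kempeSet_singleton hpc (fun u => by have := hc.one_le u; omega)
        have hle : ∀ u, u ≠ v → z u ≤ c u := by
          intro u hu
          have h1 : kempeSwap G c v j u = c u := by
            apply hyout
            rw [hSsing]
            exact fun h => hu (Set.mem_singleton_iff.mp h)
          have h2 := (hglsle.2 u (by rw [h1]; exact hc.one_le u)).2
          rw [h1] at h2
          exact h2
        exact sv_lemma hΔ hc hzg v hle hdrop
      · by_cases hjbig : Δ + 2 ≤ j
        · -- color j unused : singleton Kempe set
          have hSsing : kempeSet G c v j = {v} :=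
            kempeSet_singleton hpc (fun u => by have := hcleΔ u; omega)
          have hle : ∀ u, u ≠ v → z u ≤ c u := by
            intro u hu
            have h1 : kempeSwap G c v j u = c u := by
              apply hyout
              rw [hSsing]
              exact fun h => hu (Set.mem_singleton_iff.mp h)
            have h2 := (hglsle.2 u (by rw [h1]; exact hc.one_le u)).2
            rw [h1] at h2
            exact h2
          exact sv_lemma hΔ hc hzg v hle hdrop
        · -- 1 ≤ j ≤ Δ + 1
          have hj1 : 1 ≤ j := by omega
          have hjle : j ≤ Δ + 1 := by omega
          have hp1 : 1 ≤ c v := hc.one_le v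
          have hple : c v ≤ Δ + 1 := hcleΔ v
          have hy1 : ∀ u, 1 ≤ kempeSwap G c v j u := by
            intro u
            by_cases hu : u ∈ kempeSet G c v j
            · rcases kempeSet_mem hu with h' | h'
              · rw [hypv u hu h']
                omega
              · by_cases h'' : c u = c v
                · rw [hypv u hu h'']
                  omega
                · rw [hyqv u hu h']
                  omega
            · rw [hyout u hu]
              exact hc.one_le u
          have hzley : ∀ u, z u ≤ kempeSwap G c v j u := fun u => (hglsle.2 u (hy1 u)).2
          have hcases : (c v ≤ Δ - 1 ∧ j ≤ Δ - 1) ∨ (Δ ≤ c v ∧ Δ ≤ j) ∨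
              (c v ≤ Δ - 1 ∧ j = Δ) ∨ (c v = Δ ∧ j ≤ Δ - 1) ∨
              (c v ≤ Δ - 1 ∧ j = Δ + 1) ∨ (c v = Δ + 1 ∧ j ≤ Δ - 1) := by
            omega
          rcases hcases with ⟨h1, h2⟩ | ⟨h1, h2⟩ | ⟨h1, h2⟩ | ⟨h1, h2⟩ | ⟨h1, h2⟩ | ⟨h1, h2⟩
          · -- both low
            apply hmono
            intro u hu
            have := hzley u
            by_cases huS : u ∈ kempeSet G c v j
            · rcases kempeSet_mem huS with h' | h'
              · rw [hypv u huS h'] at this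
                omega
              · by_cases h'' : c u = c v
                · rw [hypv u huS h''] at this
                  omega
                · rw [hyqv u huS h'] at this
                  omega
            · rw [hyout u huS] at this
              omega
          · -- both high
            apply hmono
            intro u hu
            have := hzley u
            by_cases huS : u ∈ kempeSet G c v j
            · rcases kempeSet_mem huS with h' | h' <;> omega
            · rw [hyout u huS] at this
              omega
          · -- c v < Δ, j = Δ
            have hPeq : {w : V | c w = c v ∨ c w = Δ} = {w : V | c w = c v ∨ c w = j} := by
              ext x
              rw [h2]
            refine ms_lemma (a := c v) hΔ hc hzg (S := kempeSet G c v j) (r0 := v)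
              hp1 (by omega) ?_ ?_ (kempeSet_start G c v j) ?_ ?_ ?_ ?_ hdrop
            · intro u hu
              rcases kempeSet_mem hu with h' | h'
              · exact Or.inl h'
              · exact Or.inr (h'.trans h2)
            · intro u hu w hadj hw
              refine kempeSet_closed hu hadj ?_
              rcases hw with h' | h'
              · exact Or.inl h'
              · exact Or.inr (h'.trans h2.symm)
            · intro u hu
              rw [show (restrict G {w | c w = c v ∨ c w = Δ}) =
                (restrict G {w | c w = c v ∨ c w = j}) from by rw [hPeq]]
              exact hu
            · intro u hu
              have := hzley u
              rw [hyout u hu] at this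
              exact this
            · intro u hu hcu
              have := hzley u
              rw [hyqv u hu (hcu.trans h2.symm)] at this
              exact this
            · intro u hu hcu
              have := hzley u
              rw [hypv u hu hcu] at this
              omega
          · -- c v = Δ, j < Δ
            have hPeq : {w : V | c w = j ∨ c w = Δ} = {w : V | c w = c v ∨ c w = j} := by
              ext x
              rw [h1]
              exact or_comm
            refine ms_lemma (a := j) hΔ hc hzg (S := kempeSet G c v j) (r0 := v)
              hj1 (by omega) ?_ ?_ (kempeSet_start G c v j) ?_ ?_ ?_ ?_ hdrop
            · intro u hu
              rcases kempeSet_mem hu with h' | h'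
              · exact Or.inr (h'.trans h1)
              · exact Or.inl h'
            · intro u hu w hadj hw
              refine kempeSet_closed hu hadj ?_
              rcases hw with h' | h'
              · exact Or.inr h'
              · exact Or.inl (h'.trans h1.symm)
            · intro u hu
              rw [show (restrict G {w | c w = j ∨ c w = Δ}) =
                (restrict G {w | c w = c v ∨ c w = j}) from by rw [hPeq]]
              exact hu
            · intro u hu
              have := hzley u
              rw [hyout u hu] at this
              exact this
            · intro u hu hcu
              have := hzley u
              rw [hypv u hu (hcu.trans h1.symm)] at this
              exact this
            · intro u hu hcu
              have := hzley u
              rw [hyqv u hu hcu] at this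
              omega
          · -- c v < Δ, j = Δ + 1
            have hPeq : {w : V | c w = c v ∨ c w = Δ + 1} = {w : V | c w = c v ∨ c w = j} := by
              ext x
              rw [h2]
            refine ms2_lemma (a := c v) hΔ hc hzg (S := kempeSet G c v j) (r0 := v)
              hp1 (by omega) ?_ ?_ (kempeSet_start G c v j) ?_ ?_ ?_ hdrop
            · intro u hu
              rcases kempeSet_mem hu with h' | h'
              · exact Or.inl h'
              · exact Or.inr (h'.trans h2)
            · intro u hu w hadj hw
              refine kempeSet_closed hu hadj ?_
              rcases hw with h' | h'
              · exact Or.inl h'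
              · exact Or.inr (h'.trans h2.symm)
            · intro u hu
              rw [show (restrict G {w | c w = c v ∨ c w = Δ + 1}) =
                (restrict G {w | c w = c v ∨ c w = j}) from by rw [hPeq]]
              exact hu
            · intro u hu
              have := hzley u
              rw [hyout u hu] at this
              exact this
            · intro u hu hcu
              have := hzley u
              rw [hyqv u hu (hcu.trans h2.symm)] at this
              exact this
          · -- c v = Δ + 1, j < Δ
            have hPeq : {w : V | c w = j ∨ c w = Δ + 1} = {w : V | c w = c v ∨ c w = j} := by
              ext x
              rw [h1]
              exact or_comm
            refine ms2_lemma (a := j) hΔ hc hzg (S := kempeSet G c v j) (r0 := v)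
              hj1 (by omega) ?_ ?_ (kempeSet_start G c v j) ?_ ?_ ?_ hdrop
            · intro u hu
              rcases kempeSet_mem hu with h' | h'
              · exact Or.inr (h'.trans h1)
              · exact Or.inl h'
            · intro u hu w hadj hw
              refine kempeSet_closed hu hadj ?_
              rcases hw with h' | h'
              · exact Or.inr h'
              · exact Or.inl (h'.trans h1.symm)
            · intro u hu
              rw [show (restrict G {w | c w = j ∨ c w = Δ + 1}) =
                (restrict G {w | c w = c v ∨ c w = j}) from by rw [hPeq]]
              exact hu
            · intro u hu
              have := hzley u
              rw [hyout u hu] at this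
              exact this
            · intro u hu hcu
              have := hzley u
              rw [hypv u hu (hcu.trans h1.symm)] at this
              exact this
  · -- color elimination case
    subst hy
    have hple : c v ≤ Δ + 1 := hcleΔ v
    have hiile : ii ≤ Δ := by omega
    have hjjle : jj ≤ Δ := by omega
    have hyprop : ∀ u w, G.Adj u w → ceSwap G c v ii jj u ≠ ceSwap G c v ii jj w := by
      rw [ceSwap_eq_swapFun]
      exact swapFun_proper hpc hij (fun u hu => ceSet_mem hu)
        (fun u hu w hadj hw => ceSet_closed hu hadj hw)
    have hglsle := gls_le hyprop hrun
    have hyout : ∀ u, u ∉ ceSet G c v ii jj → ceSwap G c v ii jj u = c u :=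
      fun u hu => by rw [ceSwap_eq_swapFun]; exact swapFun_not_mem hu
    have hypv : ∀ u, u ∈ ceSet G c v ii jj → c u = ii → ceSwap G c v ii jj u = jj :=
      fun u hu h => by rw [ceSwap_eq_swapFun]; exact swapFun_left hu h
    have hyqv : ∀ u, u ∈ ceSet G c v ii jj → c u = jj → ceSwap G c v ii jj u = ii :=
      fun u hu h => by rw [ceSwap_eq_swapFun]; exact swapFun_right hij hu h
    have hy1 : ∀ u, 1 ≤ ceSwap G c v ii jj u := by
      intro u
      by_cases hu : u ∈ ceSet G c v ii jj
      · rcases ceSet_mem hu with h' | h'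
        · rw [hypv u hu h']
          omega
        · by_cases h'' : c u = ii
          · rw [hypv u hu h'']
            omega
          · rw [hyqv u hu h']
            omega
      · rw [hyout u hu]
        exact hc.one_le u
    have hzley : ∀ u, z u ≤ ceSwap G c v ii jj u := fun u => (hglsle.2 u (hy1 u)).2
    obtain ⟨w1, hw1adj, hw1c⟩ := hc.exists_nbr (v := v) (k := ii) hii1 (by omega)
    have hr0CE : w1 ∈ ceSet G c v ii jj :=
      ⟨w1, hw1adj, hw1c, SimpleGraph.Reachable.refl w1⟩
    have hconnCE : (c v = Δ + 1) →
        ∀ u ∈ ceSet G c v ii jj,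
          (restrict G {w | c w = ii ∨ c w = jj}).Reachable w1 u := by
      intro hcv
      have huniq : ∀ w, G.Adj v w → c w = ii → w = w1 := by
        intro w hw hcw
        have hfib := fiber_bound hc (w := v) hii1 (show ii < c v by omega) (∅ : Finset V)
          (Finset.empty_subset _)
          (by intro x hx; exact absurd hx (Finset.notMem_empty x))
        have hdeg := G.degree_le_maxDegree v
        have hcard : ((G.neighborFinset v).filter fun x => c x = ii).card ≤ 1 := by
          omega
        have h1 : w ∈ (G.neighborFinset v).filter fun x => c x = ii := by
          rw [Finset.mem_filter, G.mem_neighborFinset]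
          exact ⟨hw, hcw⟩
        have h2 : w1 ∈ (G.neighborFinset v).filter fun x => c x = ii := by
          rw [Finset.mem_filter, G.mem_neighborFinset]
          exact ⟨hw1adj, hw1c⟩
        exact Finset.card_le_one.mp hcard w h1 w1 h2
      rintro u ⟨w, hadj, hcw, hr⟩
      rw [huniq w hadj hcw] at hr
      exact hr
    have hcases : (ii ≤ Δ - 1 ∧ jj ≤ Δ - 1) ∨ (ii = Δ ∧ jj ≤ Δ - 1) ∨
        (jj = Δ ∧ ii ≤ Δ - 1) := by omega
    rcases hcases with ⟨h1, h2⟩ | ⟨h1, h2⟩ | ⟨h1, h2⟩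
    · -- both low
      apply hmono
      intro u hu
      have := hzley u
      by_cases huS : u ∈ ceSet G c v ii jj
      · rcases ceSet_mem huS with h' | h'
        · rw [hypv u huS h'] at this
          omega
        · by_cases h'' : c u = ii
          · rw [hypv u huS h''] at this
            omega
          · rw [hyqv u huS h'] at this
            omega
      · rw [hyout u huS] at this
        omega
    · -- ii = Δ, jj < Δ
      have hcv : c v = Δ + 1 := by omega
      have hPeq : {w : V | c w = jj ∨ c w = Δ} = {w : V | c w = ii ∨ c w = jj} := by
        ext x
        rw [h1]
        exact or_comm
      refine ms_lemma (a := jj) hΔ hc hzg (S := ceSet G c v ii jj) (r0 := w1)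
        hjj1 (by omega) ?_ ?_ hr0CE ?_ ?_ ?_ ?_ hdrop
      · intro u hu
        rcases ceSet_mem hu with h' | h'
        · exact Or.inr (h'.trans h1)
        · exact Or.inl h'
      · intro u hu w hadj hw
        refine ceSet_closed hu hadj ?_
        rcases hw with h' | h'
        · exact Or.inr h'
        · exact Or.inl (h'.trans h1.symm)
      · intro u hu
        rw [show (restrict G {w | c w = jj ∨ c w = Δ}) =
          (restrict G {w | c w = ii ∨ c w = jj}) from by rw [hPeq]]
        exact hconnCE hcv u hu
      · intro u hu
        have := hzley u
        rw [hyout u hu] at this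
        exact this
      · intro u hu hcu
        have := hzley u
        rw [hypv u hu (hcu.trans h1.symm)] at this
        exact this
      · intro u hu hcu
        have := hzley u
        rw [hyqv u hu hcu] at this
        omega
    · -- jj = Δ, ii < Δ
      have hcv : c v = Δ + 1 := by omega
      refine ms_lemma (a := ii) hΔ hc hzg (S := ceSet G c v ii jj) (r0 := w1)
        hii1 (by omega) ?_ ?_ hr0CE ?_ ?_ ?_ ?_ hdrop
      · intro u hu
        rcases ceSet_mem hu with h' | h'
        · exact Or.inl h'
        · exact Or.inr (h'.trans h1)
      · intro u hu w hadj hw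
        refine ceSet_closed hu hadj ?_
        rcases hw with h' | h'
        · exact Or.inl h'
        · exact Or.inr (h'.trans h1.symm)
      · intro u hu
        rw [show (restrict G {w | c w = ii ∨ c w = Δ}) =
          (restrict G {w | c w = ii ∨ c w = jj}) from by rw [h1]]
        exact hconnCE hcv u hu
      · intro u hu
        have := hzley u
        rw [hyout u hu] at this
        exact this
      · intro u hu hcu
        have := hzley u
        rw [hyqv u hu (hcu.trans h1.symm)] at this
        exact this
      · intro u hu hcu
        have := hzley u
        rw [hypv u hu hcu] at this
        omega
end DGC
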